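/- arXiv:hep-th/9907013 — 4 statements merged into one kernel-verified Lean document; each statement's English description precedes it below -/
import Mathlib

section
/- The sum φ₁+φ₂+φ₃ = π, where for positive reals a₁,a₂,a₃ one defines p(x) = (1+a₁x²)(1+a₂x²)(1+a₃x²) − 1, P(x) = p(x)/x², and φ_k = a_k ∫_{−∞}^{∞} dx / ((1+a_k x²)√(P(x))). -/
open Real

/-- `p(x) = (1+a₁x²)(1+a₂x²)(1+a₃x²) − 1` for parameters `a = (a₁,a₂,a₃)`. -/
noncomputable def pfun (a : Fin 3 → ℝ) (x : ℝ) : ℝ :=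
  (1 + a 0 * x ^ 2) * (1 + a 1 * x ^ 2) * (1 + a 2 * x ^ 2) - 1

/-- `P(x) = p(x)/x²`. -/
noncomputable def Pfun (a : Fin 3 → ℝ) (x : ℝ) : ℝ := pfun a x / x ^ 2

/-- `φ_k = a_k ∫_{−∞}^{∞} dx / ((1 + a_k x²) √(P(x)))`. -/
noncomputable def phi (a : Fin 3 → ℝ) (k : Fin 3) : ℝ :=
  a k * ∫ x : ℝ, 1 / ((1 + a k * x ^ 2) * Real.sqrt (Pfun a x))

/-! Since `1 + p(x) = ∏ (1 + a_k x²)`, one has `p'/(1 + p) = ∑ 2 a_k x / (1 + a_k x²)`, and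
`√P(x) = √p(x) / x` for `x > 0`. Together these say that `∑ a_k / ((1 + a_k x²) √P(x))` is the
derivative of `arctan √p(x)` on `x > 0`, which increases from `0` at `x = 0` to `π / 2` at
infinity. As the integrands are even, `∑ φ_k = 2 · π / 2 = π`, for any number of factors. -/

open MeasureTheory Set Filter Topology

lemma one_le_one_add_mul_sq {c : ℝ} (hc : 0 ≤ c) (x : ℝ) : 1 ≤ 1 + c * x ^ 2 :=
  le_add_of_nonneg_right (mul_nonneg hc (sq_nonneg x))

theorem HasDerivAt.arctan_sqrt {f : ℝ → ℝ} {f' x : ℝ} (hf : HasDerivAt f f' x)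
    (hx : 0 < f x) :
    HasDerivAt (fun y => Real.arctan √(f y)) (f' / (2 * √(f x) * (1 + f x))) x := by
  convert (hf.sqrt hx.ne').arctan using 1
  rw [sq_sqrt hx.le]
  field_simp

namespace AngleSum

variable {ι : Type*} [Fintype ι] (a : ι → ℝ)

noncomputable def poly (x : ℝ) : ℝ := ∏ i, (1 + a i * x ^ 2) - 1

noncomputable def integrand (i : ι) (x : ℝ) : ℝ :=
  1 / ((1 + a i * x ^ 2) * √(poly a x / x ^ 2))

variable {a}

lemma mul_sq_le_poly (ha : ∀ i, 0 ≤ a i) (i : ι) (x : ℝ) : a i * x ^ 2 ≤ poly a x := by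
  classical
  have hrest : 1 ≤ ∏ j ∈ Finset.univ.erase i, (1 + a j * x ^ 2) :=
    Finset.one_le_prod fun j _ => one_le_one_add_mul_sq (ha j) x
  rw [poly, ← Finset.mul_prod_erase Finset.univ _ (Finset.mem_univ i)]
  nlinarith [one_le_one_add_mul_sq (ha i) x]

lemma poly_pos (ha : ∀ i, 0 ≤ a i) {i : ι} (hi : 0 < a i) {x : ℝ} (hx : x ≠ 0) :
    0 < poly a x :=
  (mul_pos hi (by positivity)).trans_le (mul_sq_le_poly ha i x)

lemma poly_zero : poly a 0 = 0 := by simp [poly]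

lemma continuous_poly : Continuous (poly a) := by
  unfold poly; fun_prop

lemma tendsto_poly_atTop (ha : ∀ i, 0 ≤ a i) {i : ι} (hi : 0 < a i) :
    Tendsto (poly a) atTop atTop :=
  tendsto_atTop_mono (mul_sq_le_poly ha i)
    ((tendsto_pow_atTop two_ne_zero).const_mul_atTop hi)

lemma mul_integrand_nonneg (ha : ∀ i, 0 ≤ a i) (i : ι) (x : ℝ) :
    0 ≤ a i * integrand a i x :=
  mul_nonneg (ha i) <| one_div_nonneg.2 <|
    mul_nonneg (zero_le_one.trans (one_le_one_add_mul_sq (ha i) x)) (sqrt_nonneg _)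

lemma measurable_integrand (i : ι) : Measurable (integrand a i) := by
  unfold integrand poly; fun_prop

lemma hasDerivAt_prod_one_add_mul_sq (ha : ∀ i, 0 ≤ a i) (x : ℝ) :
    HasDerivAt (fun y => ∏ i, (1 + a i * y ^ 2))
      ((∏ i, (1 + a i * x ^ 2)) * ∑ i, 2 * a i * x / (1 + a i * x ^ 2)) x := by
  classical
  have hfac (i : ι) : HasDerivAt (fun y => 1 + a i * y ^ 2) (2 * a i * x) x :=
    (((hasDerivAt_pow 2 x).const_mul (a i)).const_add 1).congr_deriv (by push_cast; ring)
  refine (HasDerivAt.fun_finsetProd (u := Finset.univ) fun i _ => hfac i).congr_deriv ?_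
  rw [Finset.mul_sum]
  refine Finset.sum_congr rfl fun i _ => ?_
  have hq : 1 + a i * x ^ 2 ≠ 0 := (zero_lt_one.trans_le (one_le_one_add_mul_sq (ha i) x)).ne'
  rw [← Finset.prod_erase_mul Finset.univ _ (Finset.mem_univ i), smul_eq_mul,
    mul_assoc (∏ j ∈ Finset.univ.erase i, _), mul_div_cancel₀ _ hq]

lemma hasDerivAt_poly (ha : ∀ i, 0 ≤ a i) (x : ℝ) :
    HasDerivAt (poly a) ((1 + poly a x) * ∑ i, 2 * a i * x / (1 + a i * x ^ 2)) x := by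
  rw [add_comm, poly, sub_add_cancel]
  exact (hasDerivAt_prod_one_add_mul_sq ha x).sub_const 1

lemma hasDerivAt_arctan_sqrt_poly (ha : ∀ i, 0 ≤ a i) {i₀ : ι} (hi₀ : 0 < a i₀) {x : ℝ}
    (hx : 0 < x) :
    HasDerivAt (fun y => arctan √(poly a y)) (∑ i, a i * integrand a i x) x := by
  have hp := poly_pos ha hi₀ hx.ne'
  convert (hasDerivAt_poly ha x).arctan_sqrt hp using 1
  have hsqrt : √(poly a x / x ^ 2) = √(poly a x) / x := by
    rw [sqrt_div hp.le, sqrt_sq hx.le]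
  rw [mul_comm (2 * _), ← div_div, mul_div_cancel_left₀ _ (add_pos one_pos hp).ne',
    Finset.sum_div]
  refine Finset.sum_congr rfl fun i _ => ?_
  rw [integrand, hsqrt]
  field_simp

lemma continuous_arctan_sqrt_poly : Continuous fun y => arctan √(poly a y) :=
  continuous_arctan.comp (continuous_sqrt.comp continuous_poly)

lemma tendsto_arctan_sqrt_poly (ha : ∀ i, 0 ≤ a i) {i₀ : ι} (hi₀ : 0 < a i₀) :
    Tendsto (fun y => arctan √(poly a y)) atTop (𝓝 (π / 2)) :=
  tendsto_nhds_of_tendsto_nhdsWithin tendsto_arctan_atTop |>.comp <|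
    tendsto_sqrt_atTop.comp (tendsto_poly_atTop ha hi₀)

lemma integrableOn_sum_mul_integrand (ha : ∀ i, 0 ≤ a i) {i₀ : ι} (hi₀ : 0 < a i₀) :
    IntegrableOn (fun x => ∑ i, a i * integrand a i x) (Ioi 0) :=
  integrableOn_Ioi_deriv_of_nonneg continuous_arctan_sqrt_poly.continuousWithinAt
    (fun _ hx => hasDerivAt_arctan_sqrt_poly ha hi₀ hx)
    (fun x _ => Finset.sum_nonneg fun i _ => mul_integrand_nonneg ha i x)
    (tendsto_arctan_sqrt_poly ha hi₀)

lemma integral_Ioi_sum_mul_integrand (ha : ∀ i, 0 ≤ a i) {i₀ : ι} (hi₀ : 0 < a i₀) :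
    ∫ x in Ioi 0, ∑ i, a i * integrand a i x = π / 2 := by
  rw [integral_Ioi_of_hasDerivAt_of_nonneg continuous_arctan_sqrt_poly.continuousWithinAt
    (fun _ hx => hasDerivAt_arctan_sqrt_poly ha hi₀ hx)
    (fun x _ => Finset.sum_nonneg fun i _ => mul_integrand_nonneg ha i x)
    (tendsto_arctan_sqrt_poly ha hi₀)]
  simp [poly_zero]

lemma integrableOn_mul_integrand (ha : ∀ i, 0 ≤ a i) {i₀ : ι} (hi₀ : 0 < a i₀) (i : ι) :
    IntegrableOn (fun x => a i * integrand a i x) (Ioi 0) := by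
  refine (integrableOn_sum_mul_integrand ha hi₀).mono'
    ((measurable_integrand i).const_mul (a i)).aestronglyMeasurable
    (Eventually.of_forall fun x => ?_)
  rw [norm_of_nonneg (mul_integrand_nonneg ha i x)]
  exact Finset.single_le_sum (fun j _ => mul_integrand_nonneg ha j x) (Finset.mem_univ i)

lemma sum_mul_integral_Ioi_integrand (ha : ∀ i, 0 ≤ a i) {i₀ : ι} (hi₀ : 0 < a i₀) :
    ∑ i, a i * ∫ x in Ioi 0, integrand a i x = π / 2 := by
  simp_rw [← integral_const_mul]
  rw [← integral_finsetSum _ fun i _ => integrableOn_mul_integrand ha hi₀ i]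
  exact integral_Ioi_sum_mul_integrand ha hi₀

lemma integral_integrand (i : ι) :
    ∫ x, integrand a i x = 2 * ∫ x in Ioi 0, integrand a i x := by
  rw [← integral_comp_abs]
  simp [integrand, poly, sq_abs]

theorem sum_mul_integral_integrand (ha : ∀ i, 0 ≤ a i) {i₀ : ι} (hi₀ : 0 < a i₀) :
    ∑ i, a i * ∫ x, integrand a i x = π := by
  simp_rw [integral_integrand, mul_left_comm _ (2 : ℝ), ← Finset.mul_sum,
    sum_mul_integral_Ioi_integrand ha hi₀]
  ring

end AngleSum

lemma pfun_eq_poly (a : Fin 3 → ℝ) : pfun a = AngleSum.poly a := by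
  ext x
  simp [pfun, AngleSum.poly, Fin.prod_univ_three]

lemma phi_eq_mul_integral_integrand (a : Fin 3 → ℝ) (k : Fin 3) :
    phi a k = a k * ∫ x, AngleSum.integrand a k x := by
  simp only [phi, Pfun, pfun_eq_poly]
  rfl

/-- For positive `a₁,a₂,a₃`, the angles satisfy `φ₁ + φ₂ + φ₃ = π`. -/
theorem stmt_0 (a : Fin 3 → ℝ) (ha : ∀ k, 0 < a k) :
    phi a 0 + phi a 1 + phi a 2 = π := by
  simpa only [phi_eq_mul_integral_integrand, Fin.sum_univ_three] using
    AngleSum.sum_mul_integral_integrand (fun k => (ha k).le) (ha 0)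
end

section
/- On the flat 2-torus Σ = ℝ²/Λ, where Λ is the lattice generated by 2π(√2/√3, 0) and 2π(1/√6, 1/√2), the only eigenvalue of the Laplacian in the open interval (0,6) is 2, and its multiplicity is 6. -/
open Real

/-! Writing `λ* = (n √3/√2, k/√2)`, the two pairing conditions defining `Λ*` say exactly that
`n, k ∈ ℤ` with `n ≡ k (mod 2)`, and then `|λ*|² = (3n² + k²)/2`. So everything reduces to the
integer form `3n² + k²` on pairs of equal parity: its values below `12` are `0` and `4`, and the
value `4` is taken exactly at `(0, ±2)` and `(±1, ±1)`. -/

/-- The dual lattice `Λ*` of the lattice `Λ ⊂ ℝ²` with basis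
`2π(√2/√3, 0)` and `2π(1/√6, 1/√2)`: vectors pairing with both basis vectors
into `2πℤ`.  Eigenfunctions of the Laplacian on `ℝ²/Λ` correspond to `λ* ∈ Λ*`,
with eigenvalue `|λ*|²`. -/
def dualLattice : Set (ℝ × ℝ) :=
  {w | (∃ n : ℤ, w.1 * (2 * π * (Real.sqrt 2 / Real.sqrt 3)) + w.2 * 0 = 2 * π * n) ∧
       (∃ n : ℤ, w.1 * (2 * π * (1 / Real.sqrt 6)) + w.2 * (2 * π * (1 / Real.sqrt 2)) = 2 * π * n)}

noncomputable def dualPoint (p : ℤ × ℤ) : ℝ × ℝ :=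
  (p.1 * (√3 / √2), p.2 / √2)

lemma dualPoint_injective : Function.Injective dualPoint := by
  rintro ⟨n, k⟩ ⟨n', k'⟩ h
  simp only [dualPoint, Prod.mk.injEq] at h
  obtain ⟨h1, h2⟩ := h
  rw [mul_left_inj' (by positivity : √3 / √2 ≠ 0)] at h1
  rw [div_left_inj' (by positivity)] at h2
  exact Prod.ext (Int.cast_injective h1) (Int.cast_injective h2)

lemma dualPoint_normSq (p : ℤ × ℤ) :
    (dualPoint p).1 ^ 2 + (dualPoint p).2 ^ 2 = ((3 * p.1 ^ 2 + p.2 ^ 2 : ℤ) : ℝ) / 2 := by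
  simp only [dualPoint, mul_pow, div_pow, sq_sqrt (by norm_num : (0 : ℝ) ≤ 2),
    sq_sqrt (by norm_num : (0 : ℝ) ≤ 3)]
  push_cast
  ring

lemma dualLattice_pairings (w : ℝ × ℝ) :
    w.1 * (2 * π * (√2 / √3)) + w.2 * 0 = 2 * π * (w.1 * √2 / √3) ∧
    w.1 * (2 * π * (1 / √6)) + w.2 * (2 * π * (1 / √2)) =
      2 * π * ((w.1 * √2 / √3 + w.2 * √2) / 2) := by
  have h6 : 1 / √6 = √2 / √3 / 2 := by
    rw [show (6 : ℝ) = 2 * 3 by norm_num, sqrt_mul (by norm_num)]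
    field_simp
    norm_num
  refine ⟨by ring, ?_⟩
  rw [h6, ← sqrt_div_self']
  ring

lemma mem_dualLattice_iff (w : ℝ × ℝ) :
    w ∈ dualLattice ↔
      (∃ n : ℤ, w.1 * √2 / √3 = n) ∧ ∃ m : ℤ, (w.1 * √2 / √3 + w.2 * √2) / 2 = m := by
  simp only [dualLattice, Set.mem_ofPred_eq, (dualLattice_pairings w).1,
    (dualLattice_pairings w).2, mul_right_inj' two_pi_pos.ne']

lemma dualLattice_eq_image : dualLattice = dualPoint '' {p | Even (p.1 + p.2)} := by
  have h2 : √2 ≠ 0 := by positivity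
  have h3 : √3 ≠ 0 := by positivity
  ext w
  rw [mem_dualLattice_iff]
  constructor
  · rintro ⟨⟨n, hn⟩, ⟨m, hm⟩⟩
    refine ⟨(n, 2 * m - n), ⟨m, by ring⟩, ?_⟩
    simp only [dualPoint]
    push_cast
    rw [← hn, ← hm]
    ext <;> field_simp; ring
  · rintro ⟨⟨n, k⟩, ⟨m, hm⟩, rfl⟩
    simp only [dualPoint] at hm ⊢
    refine ⟨⟨n, by field_simp⟩, ⟨m, ?_⟩⟩
    field_simp
    have : (n : ℝ) + k = m + m := by exact_mod_cast hm
    linear_combination this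

lemma eq_four_of_even_add_of_lt_twelve {n k : ℤ} (hnk : Even (n + k))
    (hpos : 0 < 3 * n ^ 2 + k ^ 2) (hlt : 3 * n ^ 2 + k ^ 2 < 12) : 3 * n ^ 2 + k ^ 2 = 4 := by
  obtain ⟨m, hm⟩ := hnk
  have hn : |n| ≤ 1 := abs_le.2 ⟨by nlinarith, by nlinarith⟩
  have hk : |k| ≤ 3 := abs_le.2 ⟨by nlinarith, by nlinarith⟩
  rw [abs_le] at hn hk
  obtain ⟨hn₁, hn₂⟩ := hn
  obtain ⟨hk₁, hk₂⟩ := hk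
  interval_cases n <;> interval_cases k <;> omega

lemma setOf_three_sq_add_sq_eq_four :
    {p : ℤ × ℤ | 3 * p.1 ^ 2 + p.2 ^ 2 = 4} =
      ↑({(0, 2), (0, -2), (1, 1), (1, -1), (-1, 1), (-1, -1)} : Finset (ℤ × ℤ)) := by
  ext ⟨n, k⟩
  simp only [Set.mem_ofPred_eq, Finset.coe_insert, Finset.coe_singleton, Set.mem_insert_iff,
    Set.mem_singleton_iff, Prod.mk.injEq]
  constructor
  · intro h
    have hn : -1 ≤ n ∧ n ≤ 1 := ⟨by nlinarith, by nlinarith⟩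
    have hk : -2 ≤ k ∧ k ≤ 2 := ⟨by nlinarith, by nlinarith⟩
    obtain ⟨hn₁, hn₂⟩ := hn
    obtain ⟨hk₁, hk₂⟩ := hk
    interval_cases n <;> interval_cases k <;> simp_all
  · rintro (h | h | h | h | h | h) <;> simp [h]

lemma even_add_of_three_sq_add_sq_eq_four {p : ℤ × ℤ} (hp : 3 * p.1 ^ 2 + p.2 ^ 2 = 4) :
    Even (p.1 + p.2) := by
  have hp' : p ∈ {p : ℤ × ℤ | 3 * p.1 ^ 2 + p.2 ^ 2 = 4} := hp
  rw [setOf_three_sq_add_sq_eq_four, Finset.mem_coe] at hp'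
  fin_cases hp' <;> decide

lemma normSq_eq_two_of_mem_dualLattice {w : ℝ × ℝ} (hw : w ∈ dualLattice)
    (hIoo : w.1 ^ 2 + w.2 ^ 2 ∈ Set.Ioo (0 : ℝ) 6) : w.1 ^ 2 + w.2 ^ 2 = 2 := by
  rw [dualLattice_eq_image] at hw
  obtain ⟨p, hp, rfl⟩ := hw
  obtain ⟨hpos, hlt⟩ := hIoo
  rw [dualPoint_normSq] at hpos hlt ⊢
  have hpos' : (0 : ℝ) < (3 * p.1 ^ 2 + p.2 ^ 2 : ℤ) := by linarith
  have hlt' : ((3 * p.1 ^ 2 + p.2 ^ 2 : ℤ) : ℝ) < 12 := by linarith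
  rw [eq_four_of_even_add_of_lt_twelve hp (mod_cast hpos') (mod_cast hlt')]
  norm_num

lemma setOf_mem_dualLattice_normSq_eq_two :
    {w ∈ dualLattice | w.1 ^ 2 + w.2 ^ 2 = 2} = dualPoint '' {p | 3 * p.1 ^ 2 + p.2 ^ 2 = 4} := by
  rw [dualLattice_eq_image]
  ext w
  constructor
  · rintro ⟨⟨p, -, rfl⟩, h⟩
    rw [dualPoint_normSq] at h
    exact ⟨p, by exact_mod_cast (by linarith : ((3 * p.1 ^ 2 + p.2 ^ 2 : ℤ) : ℝ) = 4), rfl⟩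
  · rintro ⟨p, hp, rfl⟩
    refine ⟨⟨p, even_add_of_three_sq_add_sq_eq_four hp, rfl⟩, ?_⟩
    rw [dualPoint_normSq, hp]
    norm_num

/-- On the flat torus `ℝ²/Λ`, the only eigenvalue of the Laplacian in `(0,6)` is `2`,
with multiplicity `6`: the set of values `|λ*|²` lying in `(0,6)` for nonzero `λ* ∈ Λ*`
is exactly `{2}`, and there are exactly `6` dual lattice vectors with `|λ*|² = 2`. -/
theorem stmt_6 :
    ({μ : ℝ | ∃ w ∈ dualLattice, w ≠ 0 ∧ μ = w.1 ^ 2 + w.2 ^ 2 ∧ μ ∈ Set.Ioo (0 : ℝ) 6}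
        = {2}) ∧
    Set.ncard {w ∈ dualLattice | w.1 ^ 2 + w.2 ^ 2 = 2} = 6 := by
  constructor
  · ext μ
    constructor
    · rintro ⟨w, hw, -, rfl, hIoo⟩
      exact normSq_eq_two_of_mem_dualLattice hw hIoo
    · rintro rfl
      have hmem : dualPoint (0, 2) ∈ dualLattice := by
        rw [dualLattice_eq_image]
        exact ⟨(0, 2), even_two, rfl⟩
      refine ⟨dualPoint (0, 2), hmem, by simp [dualPoint], ?_, by norm_num⟩
      rw [dualPoint_normSq]
      norm_num
  · rw [setOf_mem_dualLattice_normSq_eq_two, Set.ncard_image_of_injective _ dualPoint_injective,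
      setOf_three_sq_add_sq_eq_four, Set.ncard_coe_finset]
    rfl
end

section
/- On the flat 2-torus ℝ²/Λ, where Λ is the lattice generated by 2π(√2/√3, 0) and 2π(1/√6, 1/√2), the eigenvalue 6 of the Laplacian has multiplicity exactly 6. -/
open Real

set_option maxHeartbeats 1000000 in
/-- On the flat torus `ℝ²/Λ`, the eigenvalue `6` of the Laplacian has multiplicity
exactly `6`: there are exactly `6` dual lattice vectors `λ* ∈ Λ*` with `|λ*|² = 6`. -/
theorem stmt_7 :
    Set.ncard {w ∈ dualLattice | w.1 ^ 2 + w.2 ^ 2 = 6} = 6 := by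
  have hs2 : Real.sqrt 2 ^ 2 = 2 := Real.sq_sqrt (by norm_num)
  have hs3 : Real.sqrt 3 ^ 2 = 3 := Real.sq_sqrt (by norm_num)
  have hs6 : Real.sqrt 6 ^ 2 = 6 := Real.sq_sqrt (by norm_num)
  have hs23 : Real.sqrt 2 * Real.sqrt 3 = Real.sqrt 6 := by
    rw [← Real.sqrt_mul (by norm_num)]; norm_num
  have h26 : Real.sqrt 2 * Real.sqrt 6 = 2 * Real.sqrt 3 := by
    linear_combination -Real.sqrt 2 * hs23 + Real.sqrt 3 * hs2
  have h2pos : (0:ℝ) < Real.sqrt 2 := Real.sqrt_pos.mpr (by norm_num)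
  have h3pos : (0:ℝ) < Real.sqrt 3 := Real.sqrt_pos.mpr (by norm_num)
  have h6pos : (0:ℝ) < Real.sqrt 6 := Real.sqrt_pos.mpr (by norm_num)
  have h2ne : Real.sqrt 2 ≠ 0 := ne_of_gt h2pos
  have h3ne : Real.sqrt 3 ≠ 0 := ne_of_gt h3pos
  have h6ne : Real.sqrt 6 ≠ 0 := ne_of_gt h6pos
  have h2π : (2 * π) ≠ 0 := by positivity
  have hπ : π ≠ 0 := Real.pi_ne_zero
  have hset : {w ∈ dualLattice | w.1 ^ 2 + w.2 ^ 2 = 6} =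
      {(Real.sqrt 6, 0), (-Real.sqrt 6, 0),
       (Real.sqrt 6 / 2, 3 * Real.sqrt 2 / 2), (Real.sqrt 6 / 2, -(3 * Real.sqrt 2 / 2)),
       (-(Real.sqrt 6 / 2), 3 * Real.sqrt 2 / 2), (-(Real.sqrt 6 / 2), -(3 * Real.sqrt 2 / 2))} := by
    ext ⟨a, b⟩
    simp only [dualLattice, Set.mem_setOf_eq, Set.mem_insert_iff, Set.mem_singleton_iff,
      Prod.mk.injEq]
    constructor
    · rintro ⟨⟨⟨n, h1⟩, ⟨m, h2⟩⟩, hnorm⟩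
      have h1' : a * (Real.sqrt 2 / Real.sqrt 3) = n := by
        apply mul_left_cancel₀ h2π; linear_combination h1
      have h1'' : a * Real.sqrt 2 = n * Real.sqrt 3 := by
        field_simp at h1'; linarith
      have ha : 2 * a = n * Real.sqrt 6 := by
        linear_combination Real.sqrt 2 * h1'' - a * hs2 + (n:ℝ) * hs23
      have h2' : a * (1 / Real.sqrt 6) + b * (1 / Real.sqrt 2) = m := by
        apply mul_left_cancel₀ h2π; linear_combination h2
      have h2'' : a * Real.sqrt 2 + b * Real.sqrt 6 = m * Real.sqrt 6 * Real.sqrt 2 := by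
        field_simp at h2'; linear_combination h2'
      have hb : 2 * b = (2 * m - n) * Real.sqrt 2 := by
        linear_combination (Real.sqrt 6 / 3) * h2'' - (Real.sqrt 2 * Real.sqrt 6 / 6) * ha
          + (-(b / 3) + (m : ℝ) * Real.sqrt 2 / 3 - (n : ℝ) * Real.sqrt 2 / 6) * hs6
      have hZR : 3 * (n : ℝ) ^ 2 + (2 * (m : ℝ) - n) ^ 2 = 12 := by
        linear_combination (-(a) - (n:ℝ) * Real.sqrt 6 / 2) * ha
          + (-(b) - (2 * (m:ℝ) - n) * Real.sqrt 2 / 2) * hb + 2 * hnorm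
          - ((n:ℝ) ^ 2 / 2) * hs6 - ((2 * (m:ℝ) - n) ^ 2 / 2) * hs2
      have hZ : 3 * n ^ 2 + (2 * m - n) ^ 2 = 12 := by exact_mod_cast hZR
      have hn1 : -2 ≤ n := by nlinarith [sq_nonneg (2 * m - n)]
      have hn2 : n ≤ 2 := by nlinarith [sq_nonneg (2 * m - n)]
      interval_cases n
      · -- n = -2 : m = -1, a = -√6, b = 0
        have hm : m = -1 := by
          have h0 : (2 * m + 2) ^ 2 = 0 := by linear_combination hZ
          have := pow_eq_zero_iff (n := 2) (by norm_num) |>.mp h0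
          omega
        subst hm
        push_cast at ha hb
        right; left; constructor <;> linarith
      · -- n = -1 : (2m+1)^2 = 9
        have hfac : (2 * m + 1 - 3) * (2 * m + 1 + 3) = 0 := by linear_combination hZ
        rcases mul_eq_zero.mp hfac with h | h
        · have hm : m = 1 := by omega
          subst hm; push_cast at ha hb
          right; right; right; right; left; constructor <;> linarith
        · have hm : m = -2 := by omega
          subst hm; push_cast at ha hb
          right; right; right; right; right; constructor <;> linarith
      · -- n = 0 : impossible
        exfalso
        have hm : m * m = 3 := by nlinarith
        have hm1 : -2 ≤ m := by nlinarith
        have hm2 : m ≤ 2 := by nlinarith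
        interval_cases m <;> omega
      · -- n = 1 : (2m-1)^2 = 9
        have hfac : (2 * m - 1 - 3) * (2 * m - 1 + 3) = 0 := by linear_combination hZ
        rcases mul_eq_zero.mp hfac with h | h
        · have hm : m = 2 := by omega
          subst hm; push_cast at ha hb
          right; right; left; constructor <;> linarith
        · have hm : m = -1 := by omega
          subst hm; push_cast at ha hb
          right; right; right; left; constructor <;> linarith
      · -- n = 2 : m = 1, a = √6, b = 0
        have hm : m = 1 := by
          have h0 : (2 * m - 2) ^ 2 = 0 := by linear_combination hZ
          have := pow_eq_zero_iff (n := 2) (by norm_num) |>.mp h0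
          omega
        subst hm
        push_cast at ha hb
        left; constructor <;> linarith
    · rintro (⟨rfl, rfl⟩ | ⟨rfl, rfl⟩ | ⟨rfl, rfl⟩ | ⟨rfl, rfl⟩ | ⟨rfl, rfl⟩ | ⟨rfl, rfl⟩)
      · exact ⟨⟨⟨2, by push_cast; field_simp <;>
            first
              | rfl | ring1 | linear_combination 2 * π * h26 | linear_combination 4 * π * h26
              | linear_combination -(2 * π) * h26 | linear_combination -(4 * π) * h26
              | linear_combination π * h26 | linear_combination -π * h26⟩,
          ⟨1, by push_cast; field_simp <;>
            first
              | rfl | ring1 | linear_combination 2 * π * h26 | linear_combination 4 * π * h26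
              | linear_combination -(2 * π) * h26 | linear_combination -(4 * π) * h26
              | linear_combination π * h26 | linear_combination -π * h26⟩⟩, by nlinarith⟩
      · exact ⟨⟨⟨-2, by push_cast; field_simp <;>
            first
              | rfl | ring1 | linear_combination 2 * π * h26 | linear_combination 4 * π * h26
              | linear_combination -(2 * π) * h26 | linear_combination -(4 * π) * h26
              | linear_combination π * h26 | linear_combination -π * h26⟩,
          ⟨-1, by push_cast; field_simp <;>
            first
              | rfl | ring1 | linear_combination 2 * π * h26 | linear_combination 4 * π * h26
              | linear_combination -(2 * π) * h26 | linear_combination -(4 * π) * h26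
              | linear_combination π * h26 | linear_combination -π * h26⟩⟩, by nlinarith⟩
      · exact ⟨⟨⟨1, by push_cast; field_simp <;>
            first
              | rfl | ring1 | linear_combination 2 * π * h26 | linear_combination 4 * π * h26
              | linear_combination -(2 * π) * h26 | linear_combination -(4 * π) * h26
              | linear_combination π * h26 | linear_combination -π * h26⟩,
          ⟨2, by push_cast; field_simp <;>
            first
              | rfl | ring1 | linear_combination 2 * π * h26 | linear_combination 4 * π * h26
              | linear_combination -(2 * π) * h26 | linear_combination -(4 * π) * h26
              | linear_combination π * h26 | linear_combination -π * h26⟩⟩, by nlinarith⟩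
      · exact ⟨⟨⟨1, by push_cast; field_simp <;>
            first
              | rfl | ring1 | linear_combination 2 * π * h26 | linear_combination 4 * π * h26
              | linear_combination -(2 * π) * h26 | linear_combination -(4 * π) * h26
              | linear_combination π * h26 | linear_combination -π * h26⟩,
          ⟨-1, by push_cast; field_simp <;>
            first
              | rfl | ring1 | linear_combination 2 * π * h26 | linear_combination 4 * π * h26
              | linear_combination -(2 * π) * h26 | linear_combination -(4 * π) * h26
              | linear_combination π * h26 | linear_combination -π * h26⟩⟩, by nlinarith⟩
      · exact ⟨⟨⟨-1, by push_cast; field_simp <;>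
            first
              | rfl | ring1 | linear_combination 2 * π * h26 | linear_combination 4 * π * h26
              | linear_combination -(2 * π) * h26 | linear_combination -(4 * π) * h26
              | linear_combination π * h26 | linear_combination -π * h26⟩,
          ⟨1, by push_cast; field_simp <;>
            first
              | rfl | ring1 | linear_combination 2 * π * h26 | linear_combination 4 * π * h26
              | linear_combination -(2 * π) * h26 | linear_combination -(4 * π) * h26
              | linear_combination π * h26 | linear_combination -π * h26⟩⟩, by nlinarith⟩
      · exact ⟨⟨⟨-1, by push_cast; field_simp <;>
            first
              | rfl | ring1 | linear_combination 2 * π * h26 | linear_combination 4 * π * h26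
              | linear_combination -(2 * π) * h26 | linear_combination -(4 * π) * h26
              | linear_combination π * h26 | linear_combination -π * h26⟩,
          ⟨-2, by push_cast; field_simp <;>
            first
              | rfl | ring1 | linear_combination 2 * π * h26 | linear_combination 4 * π * h26
              | linear_combination -(2 * π) * h26 | linear_combination -(4 * π) * h26
              | linear_combination π * h26 | linear_combination -π * h26⟩⟩, by nlinarith⟩
  rw [hset]
  have hne1 : ((Real.sqrt 6, 0) : ℝ × ℝ) ∉
      ({(-Real.sqrt 6, 0),
        (Real.sqrt 6 / 2, 3 * Real.sqrt 2 / 2), (Real.sqrt 6 / 2, -(3 * Real.sqrt 2 / 2)),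
        (-(Real.sqrt 6 / 2), 3 * Real.sqrt 2 / 2),
        (-(Real.sqrt 6 / 2), -(3 * Real.sqrt 2 / 2))} : Set (ℝ × ℝ)) := by
    simp only [Set.mem_insert_iff, Set.mem_singleton_iff, Prod.mk.injEq, not_or, not_and]
    refine ⟨?_, ?_, ?_, ?_, ?_⟩ <;> intro h1 h2 <;> nlinarith
  have hne2 : ((-Real.sqrt 6, 0) : ℝ × ℝ) ∉
      ({(Real.sqrt 6 / 2, 3 * Real.sqrt 2 / 2), (Real.sqrt 6 / 2, -(3 * Real.sqrt 2 / 2)),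
        (-(Real.sqrt 6 / 2), 3 * Real.sqrt 2 / 2),
        (-(Real.sqrt 6 / 2), -(3 * Real.sqrt 2 / 2))} : Set (ℝ × ℝ)) := by
    simp only [Set.mem_insert_iff, Set.mem_singleton_iff, Prod.mk.injEq, not_or, not_and]
    refine ⟨?_, ?_, ?_, ?_⟩ <;> intro h1 h2 <;> nlinarith
  have hne3 : ((Real.sqrt 6 / 2, 3 * Real.sqrt 2 / 2) : ℝ × ℝ) ∉
      ({(Real.sqrt 6 / 2, -(3 * Real.sqrt 2 / 2)),
        (-(Real.sqrt 6 / 2), 3 * Real.sqrt 2 / 2),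
        (-(Real.sqrt 6 / 2), -(3 * Real.sqrt 2 / 2))} : Set (ℝ × ℝ)) := by
    simp only [Set.mem_insert_iff, Set.mem_singleton_iff, Prod.mk.injEq, not_or, not_and]
    refine ⟨?_, ?_, ?_⟩ <;> intro h1 h2 <;> nlinarith
  have hne4 : ((Real.sqrt 6 / 2, -(3 * Real.sqrt 2 / 2)) : ℝ × ℝ) ∉
      ({(-(Real.sqrt 6 / 2), 3 * Real.sqrt 2 / 2),
        (-(Real.sqrt 6 / 2), -(3 * Real.sqrt 2 / 2))} : Set (ℝ × ℝ)) := by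
    simp only [Set.mem_insert_iff, Set.mem_singleton_iff, Prod.mk.injEq, not_or, not_and]
    refine ⟨?_, ?_⟩ <;> intro h1 h2 <;> nlinarith
  have hne5 : ((-(Real.sqrt 6 / 2), 3 * Real.sqrt 2 / 2) : ℝ × ℝ) ∉
      ({(-(Real.sqrt 6 / 2), -(3 * Real.sqrt 2 / 2))} : Set (ℝ × ℝ)) := by
    simp only [Set.mem_singleton_iff, Prod.mk.injEq, not_and]
    intro h1 h2; nlinarith
  have f5 : ({(-(Real.sqrt 6 / 2), -(3 * Real.sqrt 2 / 2))} : Set (ℝ × ℝ)).Finite :=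
    Set.finite_singleton _
  have f4 := f5.insert ((-(Real.sqrt 6 / 2), 3 * Real.sqrt 2 / 2) : ℝ × ℝ)
  have f3 := f4.insert ((Real.sqrt 6 / 2, -(3 * Real.sqrt 2 / 2)) : ℝ × ℝ)
  have f2 := f3.insert ((Real.sqrt 6 / 2, 3 * Real.sqrt 2 / 2) : ℝ × ℝ)
  have f1 := f2.insert ((-Real.sqrt 6, 0) : ℝ × ℝ)
  rw [Set.ncard_insert_of_notMem hne1 f1, Set.ncard_insert_of_notMem hne2 f2,
    Set.ncard_insert_of_notMem hne3 f3, Set.ncard_insert_of_notMem hne4 f4,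
    Set.ncard_insert_of_notMem hne5 f5, Set.ncard_singleton]
end

section
/- The triple map (a₁,a₂,a₃) ↦ (φ₁,φ₂,φ₃,A) with φ_k = a_k ∫_{−∞}^∞ dx/((1+a_k x²)√(P(x))) and A = (4π/3)(a₁a₂a₃)^{−1/2} sends (0,∞)³ into {(φ₁,φ₂,φ₃,A) : φ_k ∈ (0,π), φ₁+φ₂+φ₃ = π, A > 0}. -/
/-!
With `u_k = 1 + a_k x²` and `1 + p = ∏ u_k`, logarithmic differentiation gives, for `x > 0`,
`d/dx arctan √p = p' / (2 √p ∏ u_k) = ∑_k a_k x / (u_k √p) = ∑_k a_k / (u_k √P)`.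
So the integrands of the `φ_k` add up to the derivative of `arctan √p`, which increases from `0`
at `x = 0` to `π/2` at infinity; as the integrands are even, `∑ φ_k = π`. Each integrand is
positive away from `0`, so every `φ_k` is positive, hence also smaller than `π`.
-/

open Real

open MeasureTheory Set Filter Topology Finset

lemma hasDerivAt_arctan_sqrt_sub_one {f : ℝ → ℝ} {f' x : ℝ} (hf : HasDerivAt f f' x)
    (hx : 1 < f x) :
    HasDerivAt (fun y => arctan √(f y - 1)) (f' / (2 * √(f x - 1) * f x)) x := by
  have hpos : 0 < f x - 1 := by linarith
  convert ((hf.sub_const 1).sqrt hpos.ne').arctan using 1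
  rw [sq_sqrt hpos.le]
  field_simp
  ring

section Product

variable {ι : Type*} [Fintype ι] {a : ι → ℝ} {x : ℝ}

/-- `1 + p(x)`, for any finite family of parameters. -/
noncomputable def prodPoly (a : ι → ℝ) (x : ℝ) : ℝ := ∏ k, (1 + a k * x ^ 2)

/-- The integrand of `φ_k`, including the factor `a_k`. -/
noncomputable def phiDensity (a : ι → ℝ) (k : ι) (x : ℝ) : ℝ :=
  a k / ((1 + a k * x ^ 2) * √((prodPoly a x - 1) / x ^ 2))

lemma one_add_mul_sq_pos {c : ℝ} (hc : 0 ≤ c) (x : ℝ) : 0 < 1 + c * x ^ 2 := by positivity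

lemma one_add_mul_sq_le_prodPoly (ha : ∀ k, 0 ≤ a k) (k : ι) (x : ℝ) :
    1 + a k * x ^ 2 ≤ prodPoly a x := by
  simpa [prodPoly] using prod_le_prod_of_subset_of_one_le (singleton_subset_iff.2 (mem_univ k))
    (fun j _ => (one_add_mul_sq_pos (ha j) x).le)
    (fun j _ _ => le_add_of_nonneg_right (mul_nonneg (ha j) (sq_nonneg x)))

lemma one_lt_prodPoly [Nonempty ι] (ha : ∀ k, 0 < a k) (hx : x ≠ 0) : 1 < prodPoly a x := by
  obtain ⟨k⟩ := ‹Nonempty ι›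
  have : 0 < a k * x ^ 2 := by have := ha k; positivity
  linarith [one_add_mul_sq_le_prodPoly (fun j => (ha j).le) k x]

lemma hasDerivAt_prodPoly (ha : ∀ k, 0 ≤ a k) (x : ℝ) :
    HasDerivAt (prodPoly a) (prodPoly a x * ∑ k, 2 * a k * x / (1 + a k * x ^ 2)) x := by
  classical
  have hfac (k : ι) : HasDerivAt (fun y => 1 + a k * y ^ 2) (2 * a k * x) x := by
    simpa [mul_comm, mul_left_comm] using ((hasDerivAt_pow 2 x).const_mul (a k)).const_add 1
  refine (HasDerivAt.fun_finsetProd (u := univ) fun k _ => hfac k).congr_deriv ?_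
  rw [mul_sum]
  refine sum_congr rfl fun k hk => ?_
  rw [prodPoly, ← prod_erase_mul _ _ hk, smul_eq_mul,
    mul_assoc (∏ j ∈ univ.erase k, _), mul_div_cancel₀ _ (one_add_mul_sq_pos (ha k) x).ne']

lemma hasDerivAt_arctan_sqrt_prodPoly [Nonempty ι] (ha : ∀ k, 0 < a k) (hx : 0 < x) :
    HasDerivAt (fun y => arctan √(prodPoly a y - 1)) (∑ k, phiDensity a k x) x := by
  have hP := one_lt_prodPoly ha hx.ne'
  convert hasDerivAt_arctan_sqrt_sub_one (hasDerivAt_prodPoly (fun k => (ha k).le) x) hP using 1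
  rw [mul_sum, sum_div]
  refine sum_congr rfl fun k _ => ?_
  rw [phiDensity, sqrt_div (by linarith), sqrt_sq hx.le]
  field_simp [(one_add_mul_sq_pos (ha k).le x).ne']

lemma phiDensity_nonneg (ha : ∀ k, 0 ≤ a k) (k : ι) (x : ℝ) : 0 ≤ phiDensity a k x :=
  div_nonneg (ha k) (mul_nonneg (one_add_mul_sq_pos (ha k) x).le (sqrt_nonneg _))

lemma phiDensity_pos [Nonempty ι] (ha : ∀ k, 0 < a k) (k : ι) (hx : x ≠ 0) :
    0 < phiDensity a k x :=
  div_pos (ha k) (mul_pos (one_add_mul_sq_pos (ha k).le x)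
    (sqrt_pos.2 (div_pos (sub_pos.2 (one_lt_prodPoly ha hx)) (by positivity))))

lemma continuous_prodPoly : Continuous (prodPoly a) := by
  unfold prodPoly
  fun_prop

lemma tendsto_prodPoly_atTop [Nonempty ι] (ha : ∀ k, 0 < a k) :
    Tendsto (prodPoly a) atTop atTop := by
  obtain ⟨k⟩ := ‹Nonempty ι›
  refine tendsto_atTop_mono (one_add_mul_sq_le_prodPoly (fun j => (ha j).le) k) ?_
  exact tendsto_atTop_add_const_left _ 1
    ((tendsto_pow_atTop two_ne_zero).const_mul_atTop (ha k))

lemma tendsto_arctan_sqrt_prodPoly [Nonempty ι] (ha : ∀ k, 0 < a k) :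
    Tendsto (fun y => arctan √(prodPoly a y - 1)) atTop (𝓝 (π / 2)) :=
  (tendsto_nhds_of_tendsto_nhdsWithin tendsto_arctan_atTop).comp
    (tendsto_sqrt_atTop.comp (tendsto_atTop_add_const_right _ (-1) (tendsto_prodPoly_atTop ha)))

lemma continuous_arctan_sqrt_prodPoly :
    Continuous fun y => arctan √(prodPoly a y - 1) :=
  continuous_arctan.comp (continuous_sqrt.comp (continuous_prodPoly.sub continuous_const))

lemma integrableOn_Ioi_sum_phiDensity [Nonempty ι] (ha : ∀ k, 0 < a k) :
    IntegrableOn (fun x => ∑ k, phiDensity a k x) (Ioi 0) :=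
  integrableOn_Ioi_deriv_of_nonneg continuous_arctan_sqrt_prodPoly.continuousWithinAt
    (fun _ hx => hasDerivAt_arctan_sqrt_prodPoly ha hx)
    (fun x _ => sum_nonneg fun k _ => phiDensity_nonneg (fun j => (ha j).le) k x)
    (tendsto_arctan_sqrt_prodPoly ha)

lemma integral_Ioi_sum_phiDensity [Nonempty ι] (ha : ∀ k, 0 < a k) :
    ∫ x in Ioi 0, ∑ k, phiDensity a k x = π / 2 := by
  rw [integral_Ioi_of_hasDerivAt_of_nonneg continuous_arctan_sqrt_prodPoly.continuousWithinAt
    (fun _ hx => hasDerivAt_arctan_sqrt_prodPoly ha hx)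
    (fun x _ => sum_nonneg fun k _ => phiDensity_nonneg (fun j => (ha j).le) k x)
    (tendsto_arctan_sqrt_prodPoly ha)]
  simp [prodPoly]

lemma integrableOn_Ioi_phiDensity (ha : ∀ k, 0 < a k) (k : ι) :
    IntegrableOn (phiDensity a k) (Ioi 0) := by
  have : Nonempty ι := ⟨k⟩
  refine (integrableOn_Ioi_sum_phiDensity ha).mono' ?_ (ae_of_all _ fun x => ?_)
  · unfold phiDensity prodPoly
    exact (by fun_prop : Measurable _).aestronglyMeasurable
  · have hnonneg := phiDensity_nonneg (fun j => (ha j).le) (x := x)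
    rw [norm_of_nonneg (hnonneg k)]
    exact single_le_sum (fun j _ => hnonneg j) (mem_univ k)

lemma sum_integral_Ioi_phiDensity [Nonempty ι] (ha : ∀ k, 0 < a k) :
    ∑ k, ∫ x in Ioi 0, phiDensity a k x = π / 2 := by
  rw [← integral_finsetSum _ fun k _ => integrableOn_Ioi_phiDensity ha k]
  exact integral_Ioi_sum_phiDensity ha

lemma integral_Ioi_phiDensity_pos (ha : ∀ k, 0 < a k) (k : ι) :
    0 < ∫ x in Ioi 0, phiDensity a k x := by
  have : Nonempty ι := ⟨k⟩
  have hsupp : Set.Ioi (0 : ℝ) ⊆ Function.support (phiDensity a k) :=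
    fun x hx => (phiDensity_pos ha k (ne_of_gt hx)).ne'
  rw [setIntegral_pos_iff_support_of_nonneg_ae
    (ae_of_all _ (phiDensity_nonneg (fun j => (ha j).le) k)) (integrableOn_Ioi_phiDensity ha k),
    inter_eq_right.2 hsupp, volume_Ioi]
  exact ENNReal.zero_lt_top

end Product

lemma pfun_eq_prodPoly_sub_one (a : Fin 3 → ℝ) (x : ℝ) : pfun a x = prodPoly a x - 1 := by
  simp [pfun, prodPoly, Fin.prod_univ_three]

lemma phi_eq_two_mul_integral_Ioi (a : Fin 3 → ℝ) (k : Fin 3) :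
    phi a k = 2 * ∫ x in Ioi 0, phiDensity a k x := by
  have heven (x : ℝ) : phiDensity a k |x| = phiDensity a k x := by
    simp [phiDensity, prodPoly]
  calc phi a k = ∫ x, phiDensity a k x := by
        rw [phi, ← integral_const_mul]
        simp only [phiDensity, Pfun, pfun_eq_prodPoly_sub_one, mul_one_div]
    _ = ∫ x, phiDensity a k |x| := by simp only [heven]
    _ = 2 * ∫ x in Ioi 0, phiDensity a k x := integral_comp_abs

/-- The map `(a₁,a₂,a₃) ↦ (φ₁,φ₂,φ₃,A)`, with `A = (4π/3)(a₁a₂a₃)^{−1/2}`, sends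
`(0,∞)³` into `{(φ₁,φ₂,φ₃,A) : φ_k ∈ (0,π), φ₁+φ₂+φ₃ = π, A > 0}`. -/
theorem stmt_14 (a : Fin 3 → ℝ) (ha : ∀ k, 0 < a k) :
    (∀ k, phi a k ∈ Set.Ioo 0 π) ∧
    phi a 0 + phi a 1 + phi a 2 = π ∧
    0 < (4 * π / 3) * (a 0 * a 1 * a 2) ^ (-(1 : ℝ) / 2) := by
  have hpos (k : Fin 3) : 0 < phi a k := by
    rw [phi_eq_two_mul_integral_Ioi]
    exact mul_pos two_pos (integral_Ioi_phiDensity_pos ha k)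
  have hsum : phi a 0 + phi a 1 + phi a 2 = π := by
    have := sum_integral_Ioi_phiDensity ha
    rw [Fin.sum_univ_three] at this
    simp only [phi_eq_two_mul_integral_Ioi]
    linarith
  refine ⟨fun k => ⟨hpos k, ?_⟩, hsum, ?_⟩
  · have := hpos 0; have := hpos 1; have := hpos 2
    fin_cases k <;> simp only [Fin.zero_eta, Fin.mk_one, Fin.reduceFinMk, Fin.isValue] <;> linarith
  · have := ha 0; have := ha 1; have := ha 2
    exact mul_pos (by positivity) (rpow_pos_of_pos (by positivity) _)
end
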